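/- arXiv:2508.12331 — 3 statements merged into one kernel-verified Lean document; each statement's English description precedes it below -/
import Mathlib

section
/- Let α ∈ ℝ and let φ be a non-negative locally integrable function satisfying C₃ ≤ φ(s)/s^{2α+1} ≤ C₄ for all 0<s<1, for some constants C₃,C₄>0. Then for every non-negative measurable function h on (0,∞) and every x>0, C₃·∫ₓ^∞ ln(t/x)·h(t)dt ≤ ∫ₓ^∞ (φ(x/y)/x^{2α+1})·y^{2α}·(∫_y^∞ h(t)dt) dy ≤ C₄·∫ₓ^∞ ln(t/x)·h(t)dt. -/
open MeasureTheory Set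
open scoped ENNReal

/-! The substitution `s = x / y` turns the kernel `φ (x/y) / x^(2α+1) * y^(2α)` into
`(φ s / s^(2α+1)) * y⁻¹`, so on `y > x` it lies between `C₃ / y` and `C₄ / y`. Exchanging the
order of integration (Tonelli) gives `∫_x^∞ y⁻¹ ∫_y^∞ h = ∫_x^∞ (∫_x^t y⁻¹ dy) h(t) dt
= ∫_x^∞ log (t/x) h(t) dt`. -/

lemma div_rpow_add_one_mul_rpow_eq {x y : ℝ} (hx : 0 < x) (hy : 0 < y) (c p : ℝ) :
    c / x ^ (p + 1) * y ^ p = c / (x / y) ^ (p + 1) * y⁻¹ := by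
  rw [Real.div_rpow hx.le hy.le, Real.rpow_add hy, Real.rpow_one]
  have hxp : x ^ (p + 1) ≠ 0 := (Real.rpow_pos_of_pos hx _).ne'
  have hyp : y ^ p ≠ 0 := (Real.rpow_pos_of_pos hy _).ne'
  field_simp

theorem setLIntegral_Ioi_mul_setLIntegral_Ioi {μ : Measure ℝ} [SFinite μ] {g h : ℝ → ℝ≥0∞}
    (hg : Measurable g) (hh : Measurable h) (x : ℝ) :
    ∫⁻ y in Ioi x, g y * ∫⁻ t in Ioi y, h t ∂μ ∂μ =
      ∫⁻ t in Ioi x, (∫⁻ y in Ioo x t, g y ∂μ) * h t ∂μ := by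
  have hmeas : Measurable (Function.uncurry fun y t => (Ioi y).indicator (fun t => g y * h t) t) :=
    ((hg.comp measurable_fst).mul (hh.comp measurable_snd)).indicator
      (measurableSet_lt measurable_fst measurable_snd)
  have hinner : ∀ t, ∫⁻ y in Ioi x, (Ioi y).indicator (fun t => g y * h t) t ∂μ =
      (Ioi x).indicator (fun t => (∫⁻ y in Ioo x t, g y ∂μ) * h t) t := by
    intro t
    have hswap : (fun y => (Ioi y).indicator (fun t => g y * h t) t) =
        (Iio t).indicator fun y => g y * h t := by
      ext y
      simp only [indicator_apply, mem_Ioi, mem_Iio]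
    rw [hswap, lintegral_indicator measurableSet_Iio, Measure.restrict_restrict measurableSet_Iio,
      Iio_inter_Ioi, lintegral_mul_const _ hg]
    by_cases hxt : t ∈ Ioi x
    · rw [indicator_of_mem hxt]
    · rw [indicator_of_notMem hxt, Ioo_eq_empty hxt, Measure.restrict_empty, lintegral_zero_measure,
        zero_mul]
  calc ∫⁻ y in Ioi x, g y * ∫⁻ t in Ioi y, h t ∂μ ∂μ
      = ∫⁻ y in Ioi x, ∫⁻ t, (Ioi y).indicator (fun t => g y * h t) t ∂μ ∂μ := by
        simp_rw [lintegral_indicator measurableSet_Ioi, lintegral_const_mul _ hh]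
    _ = ∫⁻ t, ∫⁻ y in Ioi x, (Ioi y).indicator (fun t => g y * h t) t ∂μ ∂μ :=
        lintegral_lintegral_swap hmeas.aemeasurable
    _ = ∫⁻ t in Ioi x, (∫⁻ y in Ioo x t, g y ∂μ) * h t ∂μ := by
        simp_rw [hinner, lintegral_indicator measurableSet_Ioi]

theorem setLIntegral_Ioo_ofReal_inv {x t : ℝ} (hx : 0 < x) (hxt : x ≤ t) :
    ∫⁻ y in Ioo x t, ENNReal.ofReal y⁻¹ = ENNReal.ofReal (Real.log (t / x)) := by
  have hint : IntegrableOn (fun y : ℝ => y⁻¹) (Ioo x t) :=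
    ((continuousOn_inv₀.mono fun y hy => (hx.trans_le hy.1).ne').integrableOn_Icc).mono_set
      Ioo_subset_Icc_self
  have hnn : 0 ≤ᵐ[volume.restrict (Ioo x t)] fun y : ℝ => y⁻¹ := by
    filter_upwards [ae_restrict_mem measurableSet_Ioo] with y hy
    exact inv_nonneg.2 (hx.trans hy.1).le
  rw [← ofReal_integral_eq_lintegral_ofReal hint hnn, ← integral_Ioc_eq_integral_Ioo,
    ← intervalIntegral.integral_of_le hxt, integral_inv_of_pos hx (hx.trans_le hxt)]

theorem setLIntegral_Ioi_ofReal_inv_mul_setLIntegral_Ioi {h : ℝ → ℝ≥0∞} (hh : Measurable h)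
    {x : ℝ} (hx : 0 < x) :
    ∫⁻ y in Ioi x, ENNReal.ofReal y⁻¹ * ∫⁻ t in Ioi y, h t =
      ∫⁻ t in Ioi x, ENNReal.ofReal (Real.log (t / x)) * h t := by
  rw [setLIntegral_Ioi_mul_setLIntegral_Ioi measurable_inv.ennreal_ofReal hh]
  refine setLIntegral_congr_fun measurableSet_Ioi fun t ht => ?_
  rw [setLIntegral_Ioo_ofReal_inv hx (le_of_lt ht)]

theorem I2_estimate_general (α : ℝ) (φ : ℝ → ℝ) (C₃ C₄ : ℝ) (hC₃ : 0 < C₃) (hC₄ : 0 < C₄)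
    (hb : ∀ s : ℝ, 0 < s → s < 1 → C₃ ≤ φ s / s ^ (2*α+1) ∧ φ s / s ^ (2*α+1) ≤ C₄)
    (h : ℝ → ℝ≥0∞) (hh : Measurable h) (x : ℝ) (hx : 0 < x) :
    ENNReal.ofReal C₃ * (∫⁻ t in Ioi x, ENNReal.ofReal (Real.log (t/x)) * h t) ≤
      (∫⁻ y in Ioi x, ENNReal.ofReal (φ (x/y) / x ^ (2*α+1) * y ^ (2*α)) * ∫⁻ t in Ioi y, h t) ∧
    (∫⁻ y in Ioi x, ENNReal.ofReal (φ (x/y) / x ^ (2*α+1) * y ^ (2*α)) * ∫⁻ t in Ioi y, h t) ≤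
      ENNReal.ofReal C₄ * (∫⁻ t in Ioi x, ENNReal.ofReal (Real.log (t/x)) * h t) := by
  have hkernel : ∀ y ∈ Ioi x, C₃ * y⁻¹ ≤ φ (x/y) / x ^ (2*α+1) * y ^ (2*α) ∧
      φ (x/y) / x ^ (2*α+1) * y ^ (2*α) ≤ C₄ * y⁻¹ := fun y (hy : x < y) => by
    have hy0 : 0 < y := hx.trans hy
    obtain ⟨hlow, hupp⟩ := hb (x/y) (div_pos hx hy0) ((div_lt_one hy0).2 hy)
    rw [div_rpow_add_one_mul_rpow_eq hx hy0]
    exact ⟨by gcongr, by gcongr⟩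
  rw [← setLIntegral_Ioi_ofReal_inv_mul_setLIntegral_Ioi hh hx,
    ← lintegral_const_mul' _ _ ENNReal.ofReal_ne_top, ← lintegral_const_mul' _ _ ENNReal.ofReal_ne_top]
  constructor
  · refine setLIntegral_mono' measurableSet_Ioi fun y hy => ?_
    rw [← mul_assoc, ← ENNReal.ofReal_mul hC₃.le]
    exact mul_le_mul_left (ENNReal.ofReal_le_ofReal (hkernel y hy).1) _
  · refine setLIntegral_mono' measurableSet_Ioi fun y hy => ?_
    rw [← mul_assoc, ← ENNReal.ofReal_mul hC₄.le]
    exact mul_le_mul_left (ENNReal.ofReal_le_ofReal (hkernel y hy).2) _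

theorem I2_estimate (α : ℝ) (φ : ℝ → ℝ) (C₃ C₄ : ℝ) (hC₃ : 0 < C₃) (hC₄ : 0 < C₄)
    (hφnn : ∀ s, 0 ≤ φ s) (hφloc : LocallyIntegrableOn φ (Ioi 0))
    (hb : ∀ s : ℝ, 0 < s → s < 1 → C₃ ≤ φ s / s ^ (2*α+1) ∧ φ s / s ^ (2*α+1) ≤ C₄)
    (h : ℝ → ℝ≥0∞) (hh : Measurable h) (x : ℝ) (hx : 0 < x) :
    ENNReal.ofReal C₃ * (∫⁻ t in Ioi x, ENNReal.ofReal (Real.log (t/x)) * h t) ≤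
      (∫⁻ y in Ioi x, ENNReal.ofReal (φ (x/y) / x ^ (2*α+1) * y ^ (2*α)) * ∫⁻ t in Ioi y, h t) ∧
    (∫⁻ y in Ioi x, ENNReal.ofReal (φ (x/y) / x ^ (2*α+1) * y ^ (2*α)) * ∫⁻ t in Ioi y, h t) ≤
      ENNReal.ofReal C₄ * (∫⁻ t in Ioi x, ENNReal.ofReal (Real.log (t/x)) * h t) :=
  I2_estimate_general α φ C₃ C₄ hC₃ hC₄ hb h hh x hx
end

section
/- Let α ∈ ℝ and let φ be a non-negative locally integrable function satisfying: there are constants C₁,C₂,C₃,C₄>0 with C₁ ≤ φ(s)/s^{2α} ≤ C₂ for all s ≥ 1 and C₃ ≤ φ(s)/s^{2α+1} ≤ C₄ for all 0<s<1. Then there exist constants c,C>0 (depending only on C₁,C₂,C₃,C₄) such that for every non-negative measurable function h on (0,∞) and every x>0, c·E(x) ≤ H_{α,φ}(I*h)(x) ≤ C·E(x), where E(x) = (1/x)·∫₀ˣ t·h(t)dt + ∫ₓ^∞ h(t)dt + ∫ₓ^∞ ln(t/x)·h(t)dt. -/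
/-!
For `y ≤ x` the kernel `φ(x/y) y^{2α} / x^{2α+1}` of `H_{α,φ}` is comparable to `1/x`, because
`x/y ≥ 1`; for `y > x` it is comparable to `1/y`, because `x/y < 1`. Hence `H_{α,φ}(I*h)(x)` is
comparable to `(1/x) ∫₀ˣ I*h + ∫ₓ^∞ I*h(y) dy/y`, and exchanging the order of integration turns
these two terms into `(1/x) ∫₀ˣ t h(t) dt + ∫ₓ^∞ h` and `∫ₓ^∞ log(t/x) h(t) dt`.
-/

open MeasureTheory Set
open scoped ENNReal

/-- The Dunkl–Hausdorff operator (after the change of variables `y = x/t`),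
acting on `ℝ≥0∞`-valued functions. -/
noncomputable def dhL (α : ℝ) (φ : ℝ → ℝ) (f : ℝ → ℝ≥0∞) (x : ℝ) : ℝ≥0∞ :=
  ∫⁻ y in Ioi (0:ℝ), ENNReal.ofReal (φ (x/y) / x ^ (2*α+1) * y ^ (2*α)) * f y

/-- `(I*h)(y) = ∫_y^∞ h`. -/
noncomputable def IstarL (h : ℝ → ℝ≥0∞) (y : ℝ) : ℝ≥0∞ := ∫⁻ t in Ioi y, h t

lemma setLIntegral_mul_IstarL {g h : ℝ → ℝ≥0∞} (hg : Measurable g) (hh : Measurable h)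
    {s : Set ℝ} (hs : MeasurableSet s) {a : ℝ} (hsa : s ⊆ Ioi a) :
    ∫⁻ y in s, g y * IstarL h y = ∫⁻ t in Ioi a, (∫⁻ y in s ∩ Iio t, g y) * h t := by
  set F : ℝ × ℝ → ℝ≥0∞ := {p | p.1 < p.2}.indicator fun p => g p.1 * h p.2
  have hF : Measurable F :=
    ((hg.comp measurable_fst).mul (hh.comp measurable_snd)).indicator
      (measurableSet_lt measurable_fst measurable_snd)
  have inner_t : ∀ y ∈ s, g y * IstarL h y = ∫⁻ t in Ioi a, F (y, t) := by
    intro y hy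
    have hFy : (fun t => F (y, t)) = (Ioi y).indicator fun t => g y * h t := by
      ext t; simp [F, indicator_apply]
    rw [hFy, setLIntegral_indicator measurableSet_Ioi,
      inter_eq_left.2 (Ioi_subset_Ioi (hsa hy).le), lintegral_const_mul _ hh, IstarL]
  have inner_y : ∀ t, ∫⁻ y in s, F (y, t) = (∫⁻ y in s ∩ Iio t, g y) * h t := by
    intro t
    have hFt : (fun y => F (y, t)) = (Iio t).indicator fun y => g y * h t := by
      ext y; simp [F, indicator_apply]
    rw [hFt, setLIntegral_indicator measurableSet_Iio, inter_comm,
      lintegral_mul_const _ hg]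
  calc ∫⁻ y in s, g y * IstarL h y = ∫⁻ y in s, ∫⁻ t in Ioi a, F (y, t) :=
        setLIntegral_congr_fun hs inner_t
    _ = ∫⁻ t in Ioi a, ∫⁻ y in s, F (y, t) := lintegral_lintegral_swap hF.aemeasurable
    _ = ∫⁻ t in Ioi a, (∫⁻ y in s ∩ Iio t, g y) * h t := by simp_rw [inner_y]

lemma setLIntegral_Ioc_IstarL {h : ℝ → ℝ≥0∞} (hh : Measurable h) {x : ℝ} (hx : 0 ≤ x) :
    ∫⁻ y in Ioc 0 x, IstarL h y =
      (∫⁻ t in Ioo 0 x, ENNReal.ofReal t * h t) + ENNReal.ofReal x * ∫⁻ t in Ioi x, h t := by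
  have hswap := setLIntegral_mul_IstarL (g := fun _ => 1) (s := Ioc 0 x) measurable_const hh
    measurableSet_Ioc fun _ hy => hy.1
  simp only [one_mul, setLIntegral_one] at hswap
  rw [hswap, ← Ioc_union_Ioi_eq_Ioi hx, lintegral_union measurableSet_Ioi (Ioc_disjoint_Ioi le_rfl),
    ← lintegral_const_mul _ hh, Measure.restrict_congr_set Ioo_ae_eq_Ioc]
  congr 1
  · refine setLIntegral_congr_fun measurableSet_Ioc fun t ht => ?_
    have : Ioc 0 x ∩ Iio t = Ioo 0 t := by
      ext y; simp only [mem_inter_iff, mem_Ioc, mem_Iio, mem_Ioo]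
      constructor
      · rintro ⟨⟨hy, -⟩, hyt⟩; exact ⟨hy, hyt⟩
      · rintro ⟨hy, hyt⟩; exact ⟨⟨hy, hyt.le.trans ht.2⟩, hyt⟩
    rw [this, Real.volume_Ioo, sub_zero]
  · refine setLIntegral_congr_fun measurableSet_Ioi fun t ht => ?_
    rw [inter_eq_left.2 fun y hy => hy.2.trans_lt ht, Real.volume_Ioc, sub_zero]

lemma setLIntegral_Ioo_one_div {x t : ℝ} (hx : 0 < x) (hxt : x ≤ t) :
    ∫⁻ y in Ioo x t, ENNReal.ofReal (1 / y) = ENNReal.ofReal (Real.log (t / x)) := by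
  have hcont : ContinuousOn (fun y : ℝ => 1 / y) (uIcc x t) := by
    refine continuousOn_const.div continuousOn_id fun y hy => ?_
    rw [uIcc_of_le hxt] at hy
    exact (hx.trans_le hy.1).ne'
  have hint : IntegrableOn (fun y : ℝ => 1 / y) (Ioc x t) :=
    (intervalIntegrable_iff_integrableOn_Ioc_of_le hxt).1 hcont.intervalIntegrable
  have hpos : 0 ≤ᵐ[volume.restrict (Ioc x t)] fun y : ℝ => 1 / y :=
    (ae_restrict_iff' measurableSet_Ioc).2
      (ae_of_all _ fun y hy => one_div_nonneg.2 (hx.trans hy.1).le)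
  rw [Measure.restrict_congr_set Ioo_ae_eq_Ioc, ← ofReal_integral_eq_lintegral_ofReal hint hpos,
    ← intervalIntegral.integral_of_le hxt]
  simp only [one_div, integral_inv_of_pos hx (hx.trans_le hxt)]

lemma setLIntegral_Ioi_one_div_mul_IstarL {h : ℝ → ℝ≥0∞} (hh : Measurable h) {x : ℝ}
    (hx : 0 < x) :
    ∫⁻ y in Ioi x, ENNReal.ofReal (1 / y) * IstarL h y =
      ∫⁻ t in Ioi x, ENNReal.ofReal (Real.log (t / x)) * h t := by
  rw [setLIntegral_mul_IstarL (g := fun y => ENNReal.ofReal (1 / y))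
    (measurable_const.div measurable_id).ennreal_ofReal hh measurableSet_Ioi subset_rfl]
  refine setLIntegral_congr_fun measurableSet_Ioi fun t ht => ?_
  rw [Ioi_inter_Iio, setLIntegral_Ioo_one_div hx ht.le]

lemma div_rpow_add_one_mul_rpow_eq_div_div_rpow {x y : ℝ} (hx : 0 < x) (hy : 0 < y) (a β : ℝ) :
    a / x ^ (β + 1) * y ^ β = a / (x / y) ^ β * (1 / x) := by
  rw [Real.div_rpow hx.le hy.le, Real.rpow_add hx, Real.rpow_one]
  have := Real.rpow_pos_of_pos hx β
  have := Real.rpow_pos_of_pos hy β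
  field_simp

lemma div_rpow_add_one_mul_rpow_eq_div_div_rpow_add_one {x y : ℝ} (hx : 0 < x) (hy : 0 < y)
    (a β : ℝ) :
    a / x ^ (β + 1) * y ^ β = a / (x / y) ^ (β + 1) * (1 / y) := by
  rw [Real.div_rpow hx.le hy.le, Real.rpow_add hy, Real.rpow_one]
  have := Real.rpow_pos_of_pos hx (β + 1)
  have := Real.rpow_pos_of_pos hy β
  field_simp

lemma dhL_eq_add {α x : ℝ} (φ : ℝ → ℝ) (f : ℝ → ℝ≥0∞) (hx : 0 ≤ x) :
    dhL α φ f x =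
      (∫⁻ y in Ioc 0 x, ENNReal.ofReal (φ (x/y) / x ^ (2*α+1) * y ^ (2*α)) * f y) +
        ∫⁻ y in Ioi x, ENNReal.ofReal (φ (x/y) / x ^ (2*α+1) * y ^ (2*α)) * f y := by
  rw [dhL, ← Ioc_union_Ioi_eq_Ioi hx, lintegral_union measurableSet_Ioi (Ioc_disjoint_Ioi le_rfl)]

lemma dhL_kernel_bounds_of_mem_Ioc {α C₁ C₂ x y : ℝ} {φ : ℝ → ℝ}
    (hφ : ∀ s : ℝ, 1 ≤ s → C₁ ≤ φ s / s ^ (2*α) ∧ φ s / s ^ (2*α) ≤ C₂) (hy : y ∈ Ioc 0 x) :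
    C₁ * (1 / x) ≤ φ (x/y) / x ^ (2*α+1) * y ^ (2*α) ∧
      φ (x/y) / x ^ (2*α+1) * y ^ (2*α) ≤ C₂ * (1 / x) := by
  have hx : 0 < x := hy.1.trans_le hy.2
  rw [div_rpow_add_one_mul_rpow_eq_div_div_rpow hx hy.1]
  obtain ⟨hlow, hup⟩ := hφ (x / y) ((one_le_div hy.1).2 hy.2)
  have : 0 ≤ 1 / x := one_div_nonneg.2 hx.le
  exact ⟨by gcongr, by gcongr⟩

lemma dhL_kernel_bounds_of_mem_Ioi {α C₃ C₄ x y : ℝ} {φ : ℝ → ℝ}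
    (hφ : ∀ s : ℝ, 0 < s → s < 1 → C₃ ≤ φ s / s ^ (2*α+1) ∧ φ s / s ^ (2*α+1) ≤ C₄)
    (hx : 0 < x) (hy : y ∈ Ioi x) :
    C₃ * (1 / y) ≤ φ (x/y) / x ^ (2*α+1) * y ^ (2*α) ∧
      φ (x/y) / x ^ (2*α+1) * y ^ (2*α) ≤ C₄ * (1 / y) := by
  have hy₀ : 0 < y := hx.trans hy
  rw [div_rpow_add_one_mul_rpow_eq_div_div_rpow_add_one hx hy₀]
  obtain ⟨hlow, hup⟩ := hφ (x / y) (div_pos hx hy₀) ((div_lt_one hy₀).2 hy)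
  have : 0 ≤ 1 / y := one_div_nonneg.2 hy₀.le
  exact ⟨by gcongr, by gcongr⟩

lemma setLIntegral_ofReal_mul_bounds {s : Set ℝ} (hs : MeasurableSet s) {K w : ℝ → ℝ}
    {c C : ℝ} (f : ℝ → ℝ≥0∞) (hw : ∀ y ∈ s, 0 ≤ w y)
    (hK : ∀ y ∈ s, c * w y ≤ K y ∧ K y ≤ C * w y) :
    ENNReal.ofReal c * ∫⁻ y in s, ENNReal.ofReal (w y) * f y ≤
        ∫⁻ y in s, ENNReal.ofReal (K y) * f y ∧
      ∫⁻ y in s, ENNReal.ofReal (K y) * f y ≤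
        ENNReal.ofReal C * ∫⁻ y in s, ENNReal.ofReal (w y) * f y := by
  rw [← lintegral_const_mul' _ _ ENNReal.ofReal_ne_top,
    ← lintegral_const_mul' _ _ ENNReal.ofReal_ne_top]
  constructor <;> refine setLIntegral_mono' hs fun y hy => ?_ <;>
    rw [← mul_assoc, ← ENNReal.ofReal_mul' (hw y hy)] <;> gcongr
  exacts [(hK y hy).1, (hK y hy).2]

lemma min_mul_add_le_add_and_add_le_max_mul_add {a₁ a₂ b₁ b₂ S₁ S₂ D₁ D₂ : ℝ≥0∞}
    (h₁ : a₁ * S₁ ≤ D₁ ∧ D₁ ≤ b₁ * S₁) (h₂ : a₂ * S₂ ≤ D₂ ∧ D₂ ≤ b₂ * S₂) :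
    min a₁ a₂ * (S₁ + S₂) ≤ D₁ + D₂ ∧ D₁ + D₂ ≤ max b₁ b₂ * (S₁ + S₂) := by
  rw [mul_add, mul_add]
  exact ⟨add_le_add (le_trans (by gcongr; exact min_le_left _ _) h₁.1)
      (le_trans (by gcongr; exact min_le_right _ _) h₂.1),
    add_le_add (h₁.2.trans (by gcongr; exact le_max_left _ _))
      (h₂.2.trans (by gcongr; exact le_max_right _ _))⟩

theorem dunklH_Istar_estimate_general (α C₁ C₂ C₃ C₄ : ℝ)
    (hC₁ : 0 < C₁) (hC₂ : 0 < C₂) (hC₃ : 0 < C₃) :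
    ∃ c C : ℝ, 0 < c ∧ 0 < C ∧
      ∀ φ : ℝ → ℝ, (∀ s, 0 ≤ φ s) → LocallyIntegrableOn φ (Ioi 0) →
        (∀ s : ℝ, 1 ≤ s → C₁ ≤ φ s / s ^ (2*α) ∧ φ s / s ^ (2*α) ≤ C₂) →
        (∀ s : ℝ, 0 < s → s < 1 → C₃ ≤ φ s / s ^ (2*α+1) ∧ φ s / s ^ (2*α+1) ≤ C₄) →
        ∀ h : ℝ → ℝ≥0∞, Measurable h → ∀ x : ℝ, 0 < x →
          ENNReal.ofReal c * (ENNReal.ofReal (1/x) * (∫⁻ t in Ioo (0:ℝ) x, ENNReal.ofReal t * h t) + (∫⁻ t in Ioi x, h t) + (∫⁻ t in Ioi x, ENNReal.ofReal (Real.log (t/x)) * h t)) ≤ dhL α φ (IstarL h) x ∧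
          dhL α φ (IstarL h) x ≤ ENNReal.ofReal C * (ENNReal.ofReal (1/x) * (∫⁻ t in Ioo (0:ℝ) x, ENNReal.ofReal t * h t) + (∫⁻ t in Ioi x, h t) + (∫⁻ t in Ioi x, ENNReal.ofReal (Real.log (t/x)) * h t)) := by
  refine ⟨min C₁ C₃, max C₂ C₄, lt_min hC₁ hC₃, hC₂.trans_le (le_max_left _ _), ?_⟩
  intro φ _ _ hlarge hsmall h hh x hx
  have near := setLIntegral_ofReal_mul_bounds measurableSet_Ioc (IstarL h)
    (fun _ _ => one_div_nonneg.2 hx.le) fun _ hy => dhL_kernel_bounds_of_mem_Ioc hlarge hy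
  have far := setLIntegral_ofReal_mul_bounds measurableSet_Ioi (IstarL h)
    (fun y hy => one_div_nonneg.2 (hx.trans hy).le) fun _ hy =>
      dhL_kernel_bounds_of_mem_Ioi hsmall hx hy
  have hnear : ∫⁻ y in Ioc 0 x, ENNReal.ofReal (1 / x) * IstarL h y =
      ENNReal.ofReal (1/x) * (∫⁻ t in Ioo 0 x, ENNReal.ofReal t * h t) + ∫⁻ t in Ioi x, h t := by
    rw [lintegral_const_mul' _ _ ENNReal.ofReal_ne_top, setLIntegral_Ioc_IstarL hh hx.le, mul_add,
      ← mul_assoc, ← ENNReal.ofReal_mul (one_div_nonneg.2 hx.le), one_div_mul_cancel hx.ne',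
      ENNReal.ofReal_one, one_mul]
  rw [hnear] at near
  rw [setLIntegral_Ioi_one_div_mul_IstarL hh hx] at far
  rw [dhL_eq_add φ _ hx.le, ENNReal.ofReal_min, ENNReal.ofReal_max]
  exact min_mul_add_le_add_and_add_le_max_mul_add near far

theorem dunklH_Istar_estimate (α C₁ C₂ C₃ C₄ : ℝ)
    (hC₁ : 0 < C₁) (hC₂ : 0 < C₂) (hC₃ : 0 < C₃) (hC₄ : 0 < C₄) :
    ∃ c C : ℝ, 0 < c ∧ 0 < C ∧
      ∀ φ : ℝ → ℝ, (∀ s, 0 ≤ φ s) → LocallyIntegrableOn φ (Ioi 0) →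
        (∀ s : ℝ, 1 ≤ s → C₁ ≤ φ s / s ^ (2*α) ∧ φ s / s ^ (2*α) ≤ C₂) →
        (∀ s : ℝ, 0 < s → s < 1 → C₃ ≤ φ s / s ^ (2*α+1) ∧ φ s / s ^ (2*α+1) ≤ C₄) →
        ∀ h : ℝ → ℝ≥0∞, Measurable h → ∀ x : ℝ, 0 < x →
          ENNReal.ofReal c * (ENNReal.ofReal (1/x) * (∫⁻ t in Ioo (0:ℝ) x, ENNReal.ofReal t * h t) + (∫⁻ t in Ioi x, h t) + (∫⁻ t in Ioi x, ENNReal.ofReal (Real.log (t/x)) * h t)) ≤ dhL α φ (IstarL h) x ∧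
          dhL α φ (IstarL h) x ≤ ENNReal.ofReal C * (ENNReal.ofReal (1/x) * (∫⁻ t in Ioo (0:ℝ) x, ENNReal.ofReal t * h t) + (∫⁻ t in Ioi x, h t) + (∫⁻ t in Ioi x, ENNReal.ofReal (Real.log (t/x)) * h t)) :=
  dunklH_Istar_estimate_general α C₁ C₂ C₃ C₄ hC₁ hC₂ hC₃
end

section
/- Let α ∈ ℝ and let φ be a non-negative locally integrable function satisfying C₃ ≤ φ(s)/s^{2α+1} ≤ C₄ for all 0<s<1, for some constants C₃,C₄>0. Then for every non-negative measurable function h on (0,∞) and every x>0, C₃·((1/x)·∫₀ˣ t·h(t)dt + ∫ₓ^∞ h(t)dt) ≤ ∫₀ˣ (φ(y/x)·x^{2α}/y^{2α+1})·(∫_y^∞ h(t)dt) dy ≤ C₄·((1/x)·∫₀ˣ t·h(t)dt + ∫ₓ^∞ h(t)dt). -/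
/-!
By Tonelli, `∫₀ˣ ∫_y^∞ h(t) dt dy = ∫ min(t, x) h(t) dt = ∫₀ˣ t h(t) dt + x ∫ₓ^∞ h(t) dt`, so the
two outer bounds are the integrals of `C₃/x · ∫_y^∞ h` and `C₄/x · ∫_y^∞ h` over `(0, x)`.
With `s = y/x ∈ (0, 1)` the kernel is `φ(s)/s^(2α+1) · 1/x`, which lies pointwise between
`C₃/x` and `C₄/x`.
-/

open MeasureTheory Set
open scoped ENNReal

theorem lintegral_lintegral_Ioi_eq {μ ν : Measure ℝ} [SFinite μ] [SFinite ν]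
    {h : ℝ → ℝ≥0∞} (hh : Measurable h) (s : Set ℝ) :
    ∫⁻ y in s, ∫⁻ t in Ioi y, h t ∂ν ∂μ = ∫⁻ t, h t * μ (Iio t ∩ s) ∂ν := by
  have hmeas : Measurable ({p : ℝ × ℝ | p.1 < p.2}.indicator fun p => h p.2) :=
    (hh.comp measurable_snd).indicator (measurableSet_lt measurable_fst measurable_snd)
  calc ∫⁻ y in s, ∫⁻ t in Ioi y, h t ∂ν ∂μ
      = ∫⁻ y in s, ∫⁻ t, {p : ℝ × ℝ | p.1 < p.2}.indicator (fun p => h p.2) (y, t) ∂ν ∂μ := by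
        congr! 2 with y
        rw [← lintegral_indicator measurableSet_Ioi]
        rfl
    _ = ∫⁻ t, ∫⁻ y in s, {p : ℝ × ℝ | p.1 < p.2}.indicator (fun p => h p.2) (y, t) ∂μ ∂ν :=
        lintegral_lintegral_swap hmeas.aemeasurable
    _ = ∫⁻ t, h t * μ (Iio t ∩ s) ∂ν := by
        refine lintegral_congr fun t => ?_
        rw [← Measure.restrict_apply measurableSet_Iio,
          ← lintegral_indicator_const measurableSet_Iio]
        rfl

theorem lintegral_mul_ofReal_min_eq {h : ℝ → ℝ≥0∞} {x : ℝ} (hx : 0 < x) :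
    ∫⁻ t, h t * ENNReal.ofReal (min t x) =
      (∫⁻ t in Ioo 0 x, ENNReal.ofReal t * h t) + ENNReal.ofReal x * ∫⁻ t in Ioi x, h t := by
  have hsupp : (Function.support fun t => h t * ENNReal.ofReal (min t x)) ⊆ Ioi 0 := by
    intro t ht
    by_contra h0
    simp_all
  rw [← setLIntegral_eq_of_support_subset hsupp, ← Ioc_union_Ioi_eq_Ioi hx.le,
    lintegral_union measurableSet_Ioi Ioc_disjoint_Ioi_same,
    setLIntegral_congr (Ioo_ae_eq_Ioc (a := (0 : ℝ)) (b := x)).symm,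
    ← lintegral_const_mul' _ _ ENNReal.ofReal_ne_top]
  congr 1
  · refine setLIntegral_congr_fun measurableSet_Ioo fun t ht => ?_
    rw [min_eq_left ht.2.le, mul_comm]
  · refine setLIntegral_congr_fun measurableSet_Ioi fun t ht => ?_
    rw [min_eq_right ht.le, mul_comm]

theorem lintegral_Ioo_lintegral_Ioi_eq {h : ℝ → ℝ≥0∞} (hh : Measurable h) {x : ℝ} (hx : 0 < x) :
    ∫⁻ y in Ioo 0 x, ∫⁻ t in Ioi y, h t =
      (∫⁻ t in Ioo 0 x, ENNReal.ofReal t * h t) + ENNReal.ofReal x * ∫⁻ t in Ioi x, h t := by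
  simp_rw [lintegral_lintegral_Ioi_eq hh, Iio_inter_Ioo, Real.volume_Ioo, sub_zero]
  exact lintegral_mul_ofReal_min_eq hx

theorem ofReal_mul_hardy_average_eq {h : ℝ → ℝ≥0∞} (hh : Measurable h) (C : ℝ) {x : ℝ}
    (hx : 0 < x) :
    ENNReal.ofReal C *
        (ENNReal.ofReal (1 / x) * (∫⁻ t in Ioo 0 x, ENNReal.ofReal t * h t) + ∫⁻ t in Ioi x, h t) =
      ∫⁻ y in Ioo 0 x, ENNReal.ofReal (C / x) * ∫⁻ t in Ioi y, h t := by
  have hinv : ENNReal.ofReal (1 / x) * ENNReal.ofReal x = 1 := by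
    rw [← ENNReal.ofReal_mul (by positivity), one_div_mul_cancel hx.ne', ENNReal.ofReal_one]
  rw [lintegral_const_mul' _ _ ENNReal.ofReal_ne_top, lintegral_Ioo_lintegral_Ioi_eq hh hx,
    div_eq_mul_one_div C, ENNReal.ofReal_mul' (by positivity), mul_assoc,
    mul_add (ENNReal.ofReal (1 / x)), ← mul_assoc (ENNReal.ofReal (1 / x)), hinv, one_mul]

theorem mul_rpow_div_rpow_add_one_eq {x y : ℝ} (hx : 0 < x) (hy : 0 < y) (b a : ℝ) :
    b * x ^ a / y ^ (a + 1) = b / (y / x) ^ (a + 1) / x := by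
  rw [Real.div_rpow hy.le hx.le, Real.rpow_add_one hx.ne']
  field_simp

theorem I3_estimate_general (α : ℝ) (φ : ℝ → ℝ) (C₃ C₄ : ℝ)
    (hb : ∀ s : ℝ, 0 < s → s < 1 → C₃ ≤ φ s / s ^ (2*α+1) ∧ φ s / s ^ (2*α+1) ≤ C₄)
    (h : ℝ → ℝ≥0∞) (hh : Measurable h) (x : ℝ) (hx : 0 < x) :
    ENNReal.ofReal C₃ * (ENNReal.ofReal (1/x) * (∫⁻ t in Ioo (0:ℝ) x, ENNReal.ofReal t * h t) + (∫⁻ t in Ioi x, h t)) ≤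
      (∫⁻ y in Ioo (0:ℝ) x, ENNReal.ofReal (φ (y/x) * x ^ (2*α) / y ^ (2*α+1)) * ∫⁻ t in Ioi y, h t) ∧
    (∫⁻ y in Ioo (0:ℝ) x, ENNReal.ofReal (φ (y/x) * x ^ (2*α) / y ^ (2*α+1)) * ∫⁻ t in Ioi y, h t) ≤
      ENNReal.ofReal C₄ * (ENNReal.ofReal (1/x) * (∫⁻ t in Ioo (0:ℝ) x, ENNReal.ofReal t * h t) + (∫⁻ t in Ioi x, h t)) := by
  have hbx : ∀ y ∈ Ioo 0 x, _ := fun y hy =>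
    hb (y / x) (div_pos hy.1 hx) ((div_lt_one hx).2 hy.2)
  rw [ofReal_mul_hardy_average_eq hh _ hx, ofReal_mul_hardy_average_eq hh _ hx]
  constructor
  · refine setLIntegral_mono' measurableSet_Ioo fun y hy => mul_le_mul_left ?_ _
    rw [mul_rpow_div_rpow_add_one_eq hx hy.1]
    exact ENNReal.ofReal_le_ofReal (div_le_div_of_nonneg_right (hbx y hy).1 hx.le)
  · refine setLIntegral_mono' measurableSet_Ioo fun y hy => mul_le_mul_left ?_ _
    rw [mul_rpow_div_rpow_add_one_eq hx hy.1]
    exact ENNReal.ofReal_le_ofReal (div_le_div_of_nonneg_right (hbx y hy).2 hx.le)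

theorem I3_estimate (α : ℝ) (φ : ℝ → ℝ) (C₃ C₄ : ℝ) (hC₃ : 0 < C₃) (hC₄ : 0 < C₄)
    (hφnn : ∀ s, 0 ≤ φ s) (hφloc : LocallyIntegrableOn φ (Ioi 0))
    (hb : ∀ s : ℝ, 0 < s → s < 1 → C₃ ≤ φ s / s ^ (2*α+1) ∧ φ s / s ^ (2*α+1) ≤ C₄)
    (h : ℝ → ℝ≥0∞) (hh : Measurable h) (x : ℝ) (hx : 0 < x) :
    ENNReal.ofReal C₃ * (ENNReal.ofReal (1/x) * (∫⁻ t in Ioo (0:ℝ) x, ENNReal.ofReal t * h t) + (∫⁻ t in Ioi x, h t)) ≤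
      (∫⁻ y in Ioo (0:ℝ) x, ENNReal.ofReal (φ (y/x) * x ^ (2*α) / y ^ (2*α+1)) * ∫⁻ t in Ioi y, h t) ∧
    (∫⁻ y in Ioo (0:ℝ) x, ENNReal.ofReal (φ (y/x) * x ^ (2*α) / y ^ (2*α+1)) * ∫⁻ t in Ioi y, h t) ≤
      ENNReal.ofReal C₄ * (ENNReal.ofReal (1/x) * (∫⁻ t in Ioo (0:ℝ) x, ENNReal.ofReal t * h t) + (∫⁻ t in Ioi x, h t)) :=
  I3_estimate_general α φ C₃ C₄ hb h hh x hx
end
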